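/- Let G be a finite group, M = Matrix G G ℂ with the products (ω ⋆ τ)(s,t) = Σ_{r∈G} τ(r,r) ω(s r⁻¹, t r⁻¹) and (ω • τ)(s,t) = ω(s,t) Σ_{u∈G} τ(u, t s⁻¹ u), and let M₀ = {ω ∈ M : tr ω = 0}. Then the mixed Jordan-type product ρ ∘⁺ τ := (1/2)(ρ ⋆ τ + τ • ρ) is associative on M₀: (ρ ∘⁺ ω) ∘⁺ τ = ρ ∘⁺ (ω ∘⁺ τ) for all ρ, ω, τ ∈ M₀. -/
import Mathlib


open scoped BigOperators

/-- `(ω ⋆ τ)(s,t) = Σ_{r∈G} τ(r,r) ω(s r⁻¹, t r⁻¹)`. -/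
noncomputable def starConv {G : Type*} [Group G] [Fintype G]
    (ω τ : Matrix G G ℂ) : Matrix G G ℂ :=
  Matrix.of fun s t => ∑ r : G, τ r r * ω (s * r⁻¹) (t * r⁻¹)

/-- `(ω • τ)(s,t) = ω(s,t) Σ_{u∈G} τ(u, t s⁻¹ u)`. -/
noncomputable def bulConv {G : Type*} [Group G] [Fintype G]
    (ω τ : Matrix G G ℂ) : Matrix G G ℂ :=
  Matrix.of fun s t => ω s t * ∑ u : G, τ u (t * s⁻¹ * u)

/-- The mixed Jordan-type product `ρ ∘⁺ τ = (1/2)(ρ ⋆ τ + τ • ρ)`. -/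
noncomputable def jordConv {G : Type*} [Group G] [Fintype G]
    (ρ τ : Matrix G G ℂ) : Matrix G G ℂ :=
  (2 : ℂ)⁻¹ • (starConv ρ τ + bulConv τ ρ)

section Aux
variable {G : Type*} [Group G] [Fintype G]

-- linearity in appropriate arguments
private lemma jcStarL (c : ℂ) (A B τ : Matrix G G ℂ) :
    starConv (c • (A + B)) τ = c • (starConv A τ + starConv B τ) := by
  ext s t
  simp only [starConv, Matrix.of_apply, Matrix.smul_apply, Matrix.add_apply, smul_eq_mul,
    mul_add, Finset.sum_add_distrib, Finset.mul_sum]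
  congr 1 <;> exact Finset.sum_congr rfl fun r _ => by ring

private lemma jcStarR (c : ℂ) (ρ A B : Matrix G G ℂ) :
    starConv ρ (c • (A + B)) = c • (starConv ρ A + starConv ρ B) := by
  ext s t
  simp only [starConv, Matrix.of_apply, Matrix.smul_apply, Matrix.add_apply, smul_eq_mul,
    add_mul, mul_add, Finset.sum_add_distrib, Finset.mul_sum]
  congr 1 <;> exact Finset.sum_congr rfl fun r _ => by ring

private lemma jcBulL (c : ℂ) (A B τ : Matrix G G ℂ) :
    bulConv (c • (A + B)) τ = c • (bulConv A τ + bulConv B τ) := by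
  ext s t
  simp only [bulConv, Matrix.of_apply, Matrix.smul_apply, Matrix.add_apply, smul_eq_mul]
  ring

private lemma jcBulR (c : ℂ) (ρ A B : Matrix G G ℂ) :
    bulConv ρ (c • (A + B)) = c • (bulConv ρ A + bulConv ρ B) := by
  ext s t
  simp only [bulConv, Matrix.of_apply, Matrix.smul_apply, Matrix.add_apply, smul_eq_mul,
    mul_add, Finset.sum_add_distrib, Finset.mul_sum]
  ring

-- identity (1): star-star associativity
private lemma jcStarStar (ρ ω τ : Matrix G G ℂ) :
    starConv (starConv ρ ω) τ = starConv ρ (starConv ω τ) := by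
  ext s t
  simp only [starConv, Matrix.of_apply]
  rw [show (∑ r : G, (∑ q : G, τ q q * ω (r * q⁻¹) (r * q⁻¹)) * ρ (s * r⁻¹) (t * r⁻¹))
      = ∑ q : G, ∑ r : G, τ q q * ω (r * q⁻¹) (r * q⁻¹) * ρ (s * r⁻¹) (t * r⁻¹) from by
    rw [Finset.sum_comm]
    exact Finset.sum_congr rfl fun r _ => Finset.sum_mul _ _ _]
  refine Finset.sum_congr rfl fun r _ => ?_
  rw [Finset.mul_sum]
  refine Fintype.sum_bijective (· * r) (Group.mulRight_bijective r) _ _ fun q => ?_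
  simp only [mul_inv_rev, mul_inv_cancel_right, mul_assoc, mul_inv_cancel, mul_one]

-- identity (2)
private lemma jcStarBul (ρ ω τ : Matrix G G ℂ) :
    starConv (bulConv ω ρ) τ = bulConv (starConv ω τ) ρ := by
  ext s t
  simp only [starConv, bulConv, Matrix.of_apply, Finset.sum_mul, mul_inv_rev, inv_inv,
    mul_assoc, inv_mul_cancel_left, mul_inv_cancel_left]

-- identity (3a): vanishing term, needs tr ω = 0
private lemma jcBulStarZero (ρ ω τ : Matrix G G ℂ) (hω : ∑ x : G, ω x x = 0) :
    bulConv τ (starConv ρ ω) = 0 := by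
  ext s t
  simp only [bulConv, starConv, Matrix.of_apply, Matrix.zero_apply]
  have : ∑ u : G, ∑ q : G, ω q q * ρ (u * q⁻¹) (t * s⁻¹ * u * q⁻¹) = 0 := by
    rw [Finset.sum_comm]
    have h : ∀ q : G, ∑ u : G, ω q q * ρ (u * q⁻¹) (t * s⁻¹ * u * q⁻¹)
        = ω q q * ∑ u : G, ρ u (t * s⁻¹ * u) := by
      intro q
      rw [Finset.mul_sum]
      refine Fintype.sum_bijective (· * q⁻¹) (Group.mulRight_bijective q⁻¹) _ _ fun u => ?_
      simp only [mul_assoc]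
    simp only [h, ← Finset.sum_mul, hω, zero_mul]
  rw [this, mul_zero]

-- identity (3b): vanishing term, needs tr ω = 0
private lemma jcStarBulZero (ρ ω τ : Matrix G G ℂ) (hω : ∑ x : G, ω x x = 0) :
    starConv ρ (bulConv τ ω) = 0 := by
  ext s t
  simp only [starConv, bulConv, Matrix.of_apply, Matrix.zero_apply, mul_inv_cancel,
    one_mul, hω, mul_zero, zero_mul, Finset.sum_const_zero]

-- identity (4)
private lemma jcBulBul (ρ ω τ : Matrix G G ℂ) :
    bulConv τ (bulConv ω ρ) = bulConv (bulConv τ ω) ρ := by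
  ext s t
  simp only [bulConv, Matrix.of_apply, Finset.sum_mul, mul_inv_rev, inv_inv,
    mul_assoc, inv_mul_cancel_left, mul_inv_cancel_left]


end Aux

/-- the mixed Jordan-type product `∘⁺` is associative on the
subspace `M₀` of trace-zero matrices. -/
theorem jordConv_assoc_on_tracezero {G : Type*} [Group G] [Fintype G]
    (ρ ω τ : Matrix G G ℂ) (hρ : ρ.trace = 0) (hω : ω.trace = 0)
    (hτ : τ.trace = 0) :
    jordConv (jordConv ρ ω) τ = jordConv ρ (jordConv ω τ) := by
  have hω' : ∑ x : G, ω x x = 0 := by simpa [Matrix.trace, Matrix.diag] using hω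
  unfold jordConv
  rw [jcStarL, jcBulR, jcStarR, jcBulL,
    jcStarStar, jcStarBul, jcBulBul, jcBulStarZero ρ ω τ hω', jcStarBulZero ρ ω τ hω']
  module
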